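/- Let n ∈ ℕ, let Ω ⊆ ℝⁿ be compact with nonempty interior, let λ be a finite Borel measure supported on Ω with λ(O) > 0 for some open set O ⊆ Ω, and let u ∈ L²(Ω,λ) with u ≥ 0 λ-almost everywhere. For each d ∈ ℕ let F_d be the set of polynomials p of degree at most d whose localizing matrix M_d(p z), with entries ∫_Ω p(x) x^{α+β} dλ(x) for |α|,|β| ≤ d, is positive semidefinite, and let u*_d ∈ F_d be a minimizer of ∫_Ω (u − p)² dλ over F_d. Then ‖u − u*_d‖_{L²(Ω,λ)} → 0 as d → ∞. -/

import Mathlib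

/-!
Since `u ≥ 0`, truncating a continuous `L²`-approximant of `u` at `0` only brings it closer
to `u`. By Stone–Weierstrass this nonnegative continuous function is uniformly, hence in
`L²(λ)`, close to a polynomial that is strictly positive on `Ω`. A polynomial `p ≥ 0` on `Ω`
has positive semidefinite localizing matrices, because `vᵀ M_d(p z) v = ∫_Ω p (∑ v_α x^α)²`,
so `p` is feasible for every `d ≥ deg p` and the minimizer `u*_d` is at least as close to `u`.
-/

open MeasureTheory Matrix Finset Filter

noncomputable section

/-- The set of multi-indices `α : Fin n → ℕ` with `|α| = ∑ i, α i ≤ d`, as a `Finset`. -/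
def multiIdx (n d : ℕ) : Finset (Fin n → ℕ) :=
  (Fintype.piFinset fun _ : Fin n => Finset.range (d + 1)).filter fun α => ∑ i, α i ≤ d

/-- The monomial `x^α = ∏ i, x i ^ α i`. -/
def mono {n : ℕ} (α : Fin n → ℕ) (x : Fin n → ℝ) : ℝ := ∏ i, x i ^ α i

/-- The polynomial of degree at most `d` with coefficient vector `c`. -/
def poly {n : ℕ} (d : ℕ) (c : ↥(multiIdx n d) → ℝ) (x : Fin n → ℝ) : ℝ :=
  ∑ α : ↥(multiIdx n d), c α * mono (↑α) x

/-- The localizing matrix `M_d(p z)` of a function `p` w.r.t. the measure `μ` on `Ω`: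
its `(α,β)` entry is `∫_Ω p(x) x^{α+β} dλ(x)`. -/
def locMat {n : ℕ} (d : ℕ) (Ω : Set (Fin n → ℝ)) (μ : Measure (Fin n → ℝ))
    (p : (Fin n → ℝ) → ℝ) : Matrix ↥(multiIdx n d) ↥(multiIdx n d) ℝ :=
  Matrix.of fun α β : ↥(multiIdx n d) => ∫ x in Ω, p x * mono (↑α + ↑β) x ∂μ

open scoped ENNReal

lemma mem_multiIdx {n d : ℕ} {α : Fin n → ℕ} : α ∈ multiIdx n d ↔ ∑ i, α i ≤ d := by
  simp only [multiIdx, mem_filter, Fintype.mem_piFinset, mem_range, and_iff_right_iff_imp]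
  exact fun h i =>
    Nat.lt_succ_of_le ((single_le_sum (fun j _ => Nat.zero_le (α j)) (mem_univ i)).trans h)

lemma continuous_mono {n : ℕ} (α : Fin n → ℕ) : Continuous (mono α) :=
  continuous_finsetProd _ fun i _ => (continuous_apply i).pow _

lemma continuous_poly {n d : ℕ} (c : ↥(multiIdx n d) → ℝ) : Continuous (poly d c) :=
  continuous_finsetSum _ fun _ _ => continuous_const.mul (continuous_mono _)

lemma mono_add {n : ℕ} (α β : Fin n → ℕ) (x : Fin n → ℝ) :
    mono (α + β) x = mono α x * mono β x := by
  simp [mono, pow_add, prod_mul_distrib]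

lemma MvPolynomial.exists_poly_eq_eval {n d : ℕ} (P : MvPolynomial (Fin n) ℝ)
    (hP : P.totalDegree ≤ d) : ∃ c : ↥(multiIdx n d) → ℝ, poly d c = fun x => eval x P := by
  let e : (Fin n →₀ ℕ) ≃ (Fin n → ℕ) := Finsupp.equivFunOnFinite
  refine ⟨fun α => P.coeff (e.symm α), ?_⟩
  funext x
  have hsupp : P.support ⊆ (multiIdx n d).map e.symm.toEmbedding := by
    intro m hm
    refine mem_map.2 ⟨e m, mem_multiIdx.2 ?_, e.symm_apply_apply m⟩
    simpa [e, Finsupp.sum_fintype] using (le_totalDegree hm).trans hP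
  rw [poly, sum_coe_sort (multiIdx n d) fun α => P.coeff (e.symm α) * mono α x, eval_eq',
    sum_subset hsupp fun m _ hm => by simp [notMem_support_iff.1 hm], sum_map]
  rfl

theorem MvPolynomial.exists_eval_near {σ : Type*} {K : Set (σ → ℝ)} (hK : IsCompact K)
    {f : (σ → ℝ) → ℝ} (hf : ContinuousOn f K) {ε : ℝ} (hε : 0 < ε) :
    ∃ P : MvPolynomial σ ℝ, ∀ x ∈ K, |eval x P - f x| < ε := by
  have : CompactSpace K := isCompact_iff_compactSpace.mp hK
  let coord : σ → C(K, ℝ) := fun i => ⟨fun x => (x : σ → ℝ) i,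
    (continuous_apply i).comp continuous_subtype_val⟩
  have heval (P : MvPolynomial σ ℝ) (x : K) : aeval coord P x = eval (x : σ → ℝ) P := by
    induction P using MvPolynomial.induction_on <;> simp_all [coord]
  have hsep : (aeval (R := ℝ) coord).range.SeparatesPoints := by
    intro x y hxy
    obtain ⟨i, hi⟩ := Function.ne_iff.mp (Subtype.coe_ne_coe.mpr hxy)
    exact ⟨coord i, ⟨coord i, ⟨X i, aeval_X coord i⟩, rfl⟩, hi⟩
  obtain ⟨⟨g, P, rfl⟩, hg⟩ := ContinuousMap.exists_mem_subalgebra_near_continuous_of_separatesPoints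
    _ hsep _ hf.domRestrict ε hε
  exact ⟨P, fun x hx => by simpa [heval, Real.norm_eq_abs] using hg ⟨x, hx⟩⟩

theorem MvPolynomial.exists_nonneg_eval_near {σ : Type*} {K : Set (σ → ℝ)} (hK : IsCompact K)
    {f : (σ → ℝ) → ℝ} (hf : ContinuousOn f K) (hf0 : ∀ x ∈ K, 0 ≤ f x) {ε : ℝ} (hε : 0 < ε) :
    ∃ P : MvPolynomial σ ℝ, ∀ x ∈ K, 0 ≤ eval x P ∧ |eval x P - f x| < ε := by
  obtain ⟨Q, hQ⟩ := exists_eval_near hK hf (half_pos hε)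
  refine ⟨Q + C (ε / 2), fun x hx => ?_⟩
  have hQx := abs_lt.1 (hQ x hx)
  have hfx := hf0 x hx
  simp only [map_add, eval_C, abs_lt]
  refine ⟨?_, ?_, ?_⟩ <;> linarith

section LocalizingMatrix

variable {n d : ℕ} {Ω : Set (Fin n → ℝ)} {μ : Measure (Fin n → ℝ)} {p : (Fin n → ℝ) → ℝ}

lemma locMat_isHermitian : (locMat d Ω μ p).IsHermitian := by
  ext α β
  simp [locMat, add_comm]

lemma dotProduct_locMat_mulVec [IsFiniteMeasureOnCompacts μ] (hΩ : IsCompact Ω)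
    (hp : Continuous p) (v : ↥(multiIdx n d) → ℝ) :
    star v ⬝ᵥ locMat d Ω μ p *ᵥ v = ∫ x in Ω, p x * poly d v x ^ 2 ∂μ := by
  have hint (α β : ↥(multiIdx n d)) :
      Integrable (fun x => v α * (p x * mono (↑α + ↑β) x) * v β) (μ.restrict Ω) :=
    ((hp.mul (continuous_mono _)).const_mul _ |>.mul_const _).continuousOn.integrableOn_compact hΩ
  calc star v ⬝ᵥ locMat d Ω μ p *ᵥ v
      = ∑ α, ∑ β, ∫ x in Ω, v α * (p x * mono (↑α + ↑β) x) * v β ∂μ := by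
        simp only [dotProduct, mulVec, locMat, of_apply, Pi.star_apply, star_trivial, mul_sum,
          ← integral_const_mul, ← integral_mul_const, mul_assoc]
    _ = ∫ x in Ω, ∑ α, ∑ β, v α * (p x * mono (↑α + ↑β) x) * v β ∂μ := by
        rw [integral_finsetSum _ fun α _ => integrable_finsetSum _ fun β _ => hint α β]
        exact sum_congr rfl fun α _ => (integral_finsetSum _ fun β _ => hint α β).symm
    _ = ∫ x in Ω, p x * poly d v x ^ 2 ∂μ := by
        congr 1 with x
        simp only [poly, sq, mul_sum, sum_mul, mono_add]
        exact sum_congr rfl fun α _ => sum_congr rfl fun β _ => by ring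

lemma locMat_posSemidef [IsFiniteMeasureOnCompacts μ] (hΩ : IsCompact Ω) (hp : Continuous p)
    (hp0 : ∀ x ∈ Ω, 0 ≤ p x) : (locMat d Ω μ p).PosSemidef :=
  posSemidef_iff_dotProduct_mulVec.2 ⟨locMat_isHermitian, fun v => by
    rw [dotProduct_locMat_mulVec hΩ hp]
    exact setIntegral_nonneg hΩ.measurableSet fun x hx => mul_nonneg (hp0 x hx) (sq_nonneg _)⟩

end LocalizingMatrix

lemma MeasureTheory.eLpNorm_two_le_of_integral_sq_le {X : Type*} [MeasurableSpace X]
    {ν : Measure X} {f g : X → ℝ} (hf : MemLp f 2 ν) (hg : MemLp g 2 ν)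
    (h : ∫ x, f x ^ 2 ∂ν ≤ ∫ x, g x ^ 2 ∂ν) : eLpNorm f 2 ν ≤ eLpNorm g 2 ν := by
  rw [hf.eLpNorm_eq_integral_rpow_norm two_ne_zero ENNReal.ofNat_ne_top,
    hg.eLpNorm_eq_integral_rpow_norm two_ne_zero ENNReal.ofNat_ne_top]
  simp only [ENNReal.toReal_ofNat, Real.rpow_two, Real.norm_eq_abs, sq_abs]
  gcongr

lemma Continuous.memLp_restrict_of_isCompact {X : Type*} [TopologicalSpace X] [T2Space X]
    [MeasurableSpace X] [OpensMeasurableSpace X] {K : Set X} (hK : IsCompact K)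
    (μ : Measure X) [IsFiniteMeasure μ] {p : ℝ≥0∞} {f : X → ℝ} (hf : Continuous f) :
    MemLp f p (μ.restrict K) := by
  obtain ⟨C, hC⟩ := hK.exists_bound_of_continuousOn hf.continuousOn
  exact MemLp.of_bound (hf.continuousOn.aestronglyMeasurable_of_isCompact hK hK.measurableSet) C
    ((ae_restrict_iff' hK.measurableSet).2 (.of_forall hC))

theorem MeasureTheory.MemLp.exists_continuous_nonneg_eLpNorm_sub_le {X : Type*}
    [TopologicalSpace X] [NormalSpace X] [MeasurableSpace X] [BorelSpace X] {μ : Measure X}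
    [μ.WeaklyRegular] {p : ℝ≥0∞} (hp : p ≠ ∞) {f : X → ℝ} (hf : MemLp f p μ)
    (hf0 : 0 ≤ᵐ[μ] f) {ε : ℝ≥0∞} (hε : ε ≠ 0) :
    ∃ g : X → ℝ, Continuous g ∧ 0 ≤ g ∧ eLpNorm (f - g) p μ ≤ ε := by
  obtain ⟨g, hfg, -⟩ := hf.exists_boundedContinuous_eLpNorm_sub_le hp hε
  refine ⟨fun x => max (g x) 0, g.continuous.max continuous_const, fun x => le_max_right _ _,
    (eLpNorm_mono_ae ?_).trans hfg⟩
  filter_upwards [hf0] with x (hx : 0 ≤ f x)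
  have h := abs_max_sub_max_le_abs (f x) (g x) 0
  rwa [max_eq_left hx] at h

theorem exists_mvPolynomial_nonneg_eLpNorm_sub_le {σ : Type*} [Finite σ] {K : Set (σ → ℝ)}
    (hK : IsCompact K) (μ : Measure (σ → ℝ)) [IsFiniteMeasure μ] {p : ℝ≥0∞} (hp1 : 1 ≤ p)
    (hp : p ≠ ∞) {f : (σ → ℝ) → ℝ} (hf : MemLp f p (μ.restrict K))
    (hf0 : 0 ≤ᵐ[μ.restrict K] f) {ε : ℝ≥0∞} (hε : ε ≠ 0) :
    ∃ P : MvPolynomial σ ℝ, (∀ x ∈ K, 0 ≤ P.eval x) ∧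
      eLpNorm (fun x => f x - P.eval x) p (μ.restrict K) ≤ ε := by
  have hε2 : ε / 2 ≠ 0 := (ENNReal.half_pos hε).ne'
  obtain ⟨g, hg, hg0, hfg⟩ := hf.exists_continuous_nonneg_eLpNorm_sub_le hp hf0 hε2
  set M := μ.restrict K Set.univ ^ p.toReal⁻¹
  have hM : M ≠ ∞ := ENNReal.rpow_ne_top_of_nonneg (by positivity) (measure_ne_top _ _)
  obtain ⟨δ, hδ, hδM⟩ := ENNReal.exists_nnreal_pos_mul_lt hM hε2
  obtain ⟨P, hP⟩ := MvPolynomial.exists_nonneg_eval_near hK hg.continuousOn (fun x _ => hg0 x) hδ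
  refine ⟨P, fun x hx => (hP x hx).1, ?_⟩
  have hgP : eLpNorm (g - fun x => P.eval x) p (μ.restrict K) ≤ M * δ := by
    refine (eLpNorm_le_of_ae_bound ((ae_restrict_iff' hK.measurableSet).2 (.of_forall
      fun x hx => ?_))).trans_eq (by rw [ENNReal.ofReal_coe_nnreal])
    simpa [Real.norm_eq_abs, abs_sub_comm] using (hP x hx).2.le
  calc eLpNorm (fun x => f x - P.eval x) p (μ.restrict K)
      = eLpNorm ((f - g) + (g - fun x => P.eval x)) p (μ.restrict K) := by
        congr 1 with x
        simp
    _ ≤ eLpNorm (f - g) p (μ.restrict K) + eLpNorm (g - fun x => P.eval x) p (μ.restrict K) :=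
        eLpNorm_add_le (hf.aestronglyMeasurable.sub hg.aestronglyMeasurable)
          (hg.sub (MvPolynomial.continuous_eval P)).aestronglyMeasurable hp1
    _ ≤ ε / 2 + ε / 2 := add_le_add hfg (hgP.trans (mul_comm M _ ▸ hδM.le))
    _ = ε := ENNReal.add_halves ε

theorem stmt9_general (n : ℕ) (Ω : Set (Fin n → ℝ)) (hΩ : IsCompact Ω)
    (μ : Measure (Fin n → ℝ)) [IsFiniteMeasure μ]
    (u : (Fin n → ℝ) → ℝ) (hu : MemLp u 2 (μ.restrict Ω))
    (hupos : ∀ᵐ x ∂(μ.restrict Ω), 0 ≤ u x)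
    (U : ℕ → (Fin n → ℝ) → ℝ)
    (hUfeas : ∀ d, ∃ c : ↥(multiIdx n d) → ℝ,
      U d = poly d c ∧ (locMat d Ω μ (U d)).PosSemidef)
    (hUmin : ∀ d, ∀ p : ↥(multiIdx n d) → ℝ, (locMat d Ω μ (poly d p)).PosSemidef →
      ∫ x in Ω, (u x - U d x) ^ 2 ∂μ ≤ ∫ x in Ω, (u x - poly d p x) ^ 2 ∂μ) :
    Tendsto (fun d => eLpNorm (fun x => u x - U d x) 2 (μ.restrict Ω)) atTop (nhds 0) := by
  refine ENNReal.tendsto_atTop_zero.2 fun ε hε => ?_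
  obtain ⟨P, hP0, huP⟩ :=
    exists_mvPolynomial_nonneg_eLpNorm_sub_le hΩ μ one_le_two ENNReal.ofNat_ne_top hu hupos hε.ne'
  refine ⟨P.totalDegree, fun d hd => le_trans ?_ huP⟩
  obtain ⟨c, hc⟩ := P.exists_poly_eq_eval hd
  obtain ⟨c', hUc', -⟩ := hUfeas d
  have hfeas : (locMat d Ω μ (poly d c)).PosSemidef :=
    hc ▸ locMat_posSemidef hΩ (MvPolynomial.continuous_eval P) hP0
  have hmin := hUmin d c hfeas
  rw [hc] at hmin
  refine eLpNorm_two_le_of_integral_sq_le ?_ ?_ hmin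
  · exact hu.sub (hUc' ▸ (continuous_poly c').memLp_restrict_of_isCompact hΩ μ)
  · exact hu.sub ((MvPolynomial.continuous_eval P).memLp_restrict_of_isCompact hΩ μ)

/-- if for each `d` the polynomial `U d` of degree at most `d` minimizes
`∫_Ω (u - p)² dλ` over the set `F_d` of polynomials `p` of degree at most `d` whose
localizing matrix `M_d(p z)` is positive semidefinite, then
`‖u - U d‖_{L²(Ω,λ)} → 0` as `d → ∞`. -/
theorem stmt9 (n : ℕ) (Ω : Set (Fin n → ℝ)) (hΩ : IsCompact Ω)
    (hΩint : (interior Ω).Nonempty)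
    (μ : Measure (Fin n → ℝ)) [IsFiniteMeasure μ] (hsupp : μ Ωᶜ = 0)
    (O : Set (Fin n → ℝ)) (hO : IsOpen O) (hOΩ : O ⊆ Ω) (hOpos : 0 < μ O)
    (u : (Fin n → ℝ) → ℝ) (hu : MemLp u 2 (μ.restrict Ω))
    (hupos : ∀ᵐ x ∂(μ.restrict Ω), 0 ≤ u x)
    (U : ℕ → (Fin n → ℝ) → ℝ)
    (hUfeas : ∀ d, ∃ c : ↥(multiIdx n d) → ℝ,
      U d = poly d c ∧ (locMat d Ω μ (U d)).PosSemidef)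
    (hUmin : ∀ d, ∀ p : ↥(multiIdx n d) → ℝ, (locMat d Ω μ (poly d p)).PosSemidef →
      ∫ x in Ω, (u x - U d x) ^ 2 ∂μ ≤ ∫ x in Ω, (u x - poly d p x) ^ 2 ∂μ) :
    Tendsto (fun d => eLpNorm (fun x => u x - U d x) 2 (μ.restrict Ω)) atTop (nhds 0) :=
  stmt9_general n Ω hΩ μ u hu hupos U hUfeas hUmin
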